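/- If B ⊆ ℤ^C is a nonempty M-convex set, then the set function f(S) = sup{ x(S) : x ∈ B } (for S ⊆ C) is submodular whenever it is finite-valued. -/

import Mathlib

/-!
It suffices that `x(X ∪ Y) + y(X ∩ Y) ≤ f(X) + f(Y)` for all `x, y ∈ B`, proved by induction
on `‖x - y‖₁`. If `x ≤ y` on `Y \ X`, moving `Y \ X` from `x` to `y` bounds the left side by
`x(X) + y(Y)`. Otherwise pick `u ∈ Y \ X` with `y u < x u`; the exchange axiom gives
`x - e_u + e_v ∈ B` with `x v < y v`. If `v ∈ X ∪ Y`, this point has the same value on `X ∪ Y`;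
if not, exchanging `y` at `v` gives `y - e_v + e_w ∈ B`, whose value on `X ∩ Y` is no smaller
since `v ∉ X ∩ Y`. Either exchange brings the pair closer by two.
-/

open Finset

section

variable {C : Type*}

def l1Dist [Fintype C] (x y : C → ℤ) : ℕ :=
  ∑ c, (x c - y c).natAbs

theorem l1Dist_comm [Fintype C] (x y : C → ℤ) : l1Dist x y = l1Dist y x := by
  refine sum_congr rfl fun c _ => ?_
  rw [← Int.natAbs_neg, neg_sub]

variable [DecidableEq C]

def IsMConvex (B : Set (C → ℤ)) : Prop :=
  ∀ x ∈ B, ∀ y ∈ B, ∀ u : C, y u < x u →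
    ∃ v : C, x v < y v ∧ x - Pi.single u 1 + Pi.single v 1 ∈ B

theorem l1Dist_sub_single_add_single [Fintype C] {x y : C → ℤ} {u v : C}
    (hu : y u < x u) (hv : x v < y v) :
    l1Dist (x - Pi.single u 1 + Pi.single v 1) y + 2 = l1Dist x y := by
  have hterm : ∀ c, ((x - Pi.single u 1 + Pi.single v 1 : C → ℤ) c - y c).natAbs
      + ((if c = u then 1 else 0) + (if c = v then 1 else 0)) = (x c - y c).natAbs := by
    intro c
    simp only [Pi.add_apply, Pi.sub_apply, Pi.single_apply]
    split_ifs <;> subst_vars <;> omega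
  rw [l1Dist, l1Dist, ← sum_congr rfl fun c _ => hterm c, sum_add_distrib, sum_add_distrib,
    sum_ite_eq', sum_ite_eq']
  simp

theorem sum_sub_single_add_single (x : C → ℤ) (u v : C) (S : Finset C) :
    ∑ j ∈ S, (x - Pi.single u 1 + Pi.single v 1 : C → ℤ) j
      = ∑ j ∈ S, x j - (if u ∈ S then 1 else 0) + (if v ∈ S then 1 else 0) := by
  simp only [Pi.add_apply, Pi.sub_apply, sum_add_distrib, sum_sub_distrib, sum_pi_single']

theorem sum_union_add_sum_inter_le_of_le_on_sdiff {x y : C → ℤ} {X Y : Finset C}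
    (h : ∀ j ∈ Y \ X, x j ≤ y j) :
    ∑ j ∈ X ∪ Y, x j + ∑ j ∈ X ∩ Y, y j ≤ ∑ j ∈ X, x j + ∑ j ∈ Y, y j := by
  have hx := sum_union_inter (s₁ := X) (s₂ := Y) (f := x)
  have hxY := sum_inter_add_sum_sdiff Y X x
  have hyY := sum_inter_add_sum_sdiff Y X y
  have hle := sum_le_sum h
  rw [inter_comm] at hxY hyY
  linarith

theorem IsMConvex.sum_union_add_sum_inter_le [Fintype C] {B : Set (C → ℤ)} (hB : IsMConvex B)
    {X Y : Finset C} {a b : ℤ} (ha : ∀ z ∈ B, ∑ j ∈ X, z j ≤ a)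
    (hb : ∀ z ∈ B, ∑ j ∈ Y, z j ≤ b) {x y : C → ℤ} (hx : x ∈ B) (hy : y ∈ B) :
    ∑ j ∈ X ∪ Y, x j + ∑ j ∈ X ∩ Y, y j ≤ a + b := by
  by_cases hdom : ∀ j ∈ Y \ X, x j ≤ y j
  · linarith [sum_union_add_sum_inter_le_of_le_on_sdiff hdom, ha x hx, hb y hy]
  push Not at hdom
  obtain ⟨u, huYX, hyu⟩ := hdom
  obtain ⟨v, hxv, hx'⟩ := hB x hx y hy u hyu
  have hdist := l1Dist_sub_single_add_single hyu hxv
  have huXY : u ∈ X ∪ Y := mem_union_right _ (mem_sdiff.mp huYX).1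
  by_cases hvXY : v ∈ X ∪ Y
  · have := hB.sum_union_add_sum_inter_le ha hb hx' hy
    rw [sum_sub_single_add_single] at this
    simpa [huXY, hvXY] using this
  · obtain ⟨w, hyw, hy'⟩ := hB y hy x hx v hxv
    have hdist' := l1Dist_sub_single_add_single hxv hyw
    have hvX : v ∉ X ∩ Y := fun h => hvXY (mem_union_left _ (mem_inter.mp h).1)
    have := hB.sum_union_add_sum_inter_le ha hb hx hy'
    rw [sum_sub_single_add_single] at this
    simp only [hvX, if_false, sub_zero] at this
    split_ifs at this <;> linarith
termination_by l1Dist x y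
decreasing_by
  · omega
  · rw [l1Dist_comm x, l1Dist_comm x]; omega

end

/-- The set function `S ↦ max{ x(S) : x ∈ B }` associated with a nonempty
finite M-convex set `B` is submodular. -/
theorem M_convex_sup_submodular {C : Type*} [Fintype C] [DecidableEq C]
    (B : Finset (C → ℤ)) (hne : B.Nonempty)
    (hex : ∀ x ∈ B, ∀ y ∈ B, ∀ u : C, y u < x u →
      ∃ v : C, x v < y v ∧ x - Pi.single u 1 + Pi.single v 1 ∈ B)
    (X Y : Finset C) :
    B.sup' hne (fun x => ∑ j ∈ X ∪ Y, x j)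
      + B.sup' hne (fun x => ∑ j ∈ X ∩ Y, x j)
    ≤ B.sup' hne (fun x => ∑ j ∈ X, x j)
      + B.sup' hne (fun x => ∑ j ∈ Y, x j) := by
  have hB : IsMConvex (B : Set (C → ℤ)) := hex
  obtain ⟨x, hx, hxmax⟩ := exists_mem_eq_sup' hne fun x => ∑ j ∈ X ∪ Y, x j
  obtain ⟨y, hy, hymax⟩ := exists_mem_eq_sup' hne fun x => ∑ j ∈ X ∩ Y, x j
  rw [hxmax, hymax]
  exact hB.sum_union_add_sum_inter_le (fun z hz => le_sup' _ hz) (fun z hz => le_sup' _ hz) hx hy
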